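/- Tensor order: if f₁ = T(P,P'), f₂ = T(Q,Q'), f₃ = T(P₁,P₁') are trade-off functions of independent pairs with f₂(α) ≤ f₃(α) for all α, then (f₁ ⊗ f₂)(α) ≤ (f₁ ⊗ f₃)(α) for all α, where f ⊗ g denotes the trade-off function of the corresponding product distributions: T(P⊗Q, P'⊗Q') = T(P,P') ⊗ T(Q,Q'). -/

import Mathlib

/-!
A test `φ` on `Ω₁ × Ω₃` is matched fibre by fibre: the fibre `φ (x, ·)` has size `g x` under `P₁`,
and a near-optimal test of `Q` against `Q'` at level `g x` has type II error close to
`T(Q,Q')(g x) ≤ T(P₁,P₁')(g x)`, hence at most that of the fibre. Gluing these fibre tests gives a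
test on `Ω₁ × Ω₂` of the same size under `P ⊗ Q` and, up to `ε`, no larger type II error under
`P' ⊗ Q'`. To glue measurably, `g x` is rounded up to the grid `ℕ / n`, so that countably many
fibre tests suffice; the excess size `1 / n` is then removed by shrinking the glued test, at a
cost `(1 / n) / α`. At `α = 0` nothing can be shrunk, but then `g = 0` almost everywhere and the
rounding is exact.
-/

open MeasureTheory ProbabilityTheory

/-- The trade-off function `T(P,Q)(a)`. -/
noncomputable def tradeOff {Ω : Type*} [MeasurableSpace Ω] (P Q : Measure Ω) (a : ℝ) : ℝ :=
  sInf { b : ℝ | ∃ φ : Ω → ℝ, Measurable φ ∧ (∀ x, φ x ∈ Set.Icc (0:ℝ) 1) ∧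
    (∫ x, φ x ∂P) ≤ a ∧ b = 1 - ∫ x, φ x ∂Q }

open Set

structure IsTest {Ω : Type*} [MeasurableSpace Ω] (φ : Ω → ℝ) : Prop where
  measurable : Measurable φ
  mem_Icc : ∀ x, φ x ∈ Icc (0 : ℝ) 1

namespace IsTest

variable {Ω : Type*} [MeasurableSpace Ω] {φ : Ω → ℝ}

lemma integrable (hφ : IsTest φ) (μ : Measure Ω) [IsFiniteMeasure μ] : Integrable φ μ :=
  (integrable_const (1 : ℝ)).mono' hφ.measurable.aestronglyMeasurable
    (Filter.Eventually.of_forall fun x => by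
      rw [Real.norm_eq_abs, abs_of_nonneg (hφ.mem_Icc x).1]; exact (hφ.mem_Icc x).2)

lemma integral_nonneg (hφ : IsTest φ) (μ : Measure Ω) : 0 ≤ ∫ x, φ x ∂μ :=
  MeasureTheory.integral_nonneg fun x => (hφ.mem_Icc x).1

lemma integral_le_one (hφ : IsTest φ) (μ : Measure Ω) [IsProbabilityMeasure μ] :
    ∫ x, φ x ∂μ ≤ 1 := by
  simpa using integral_mono (hφ.integrable μ) (integrable_const 1) fun x => (hφ.mem_Icc x).2

lemma const_mul (hφ : IsTest φ) {s : ℝ} (hs : s ∈ Icc (0 : ℝ) 1) : IsTest fun x => s * φ x where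
  measurable := measurable_const.mul hφ.measurable
  mem_Icc x := ⟨mul_nonneg hs.1 (hφ.mem_Icc x).1,
    mul_le_one₀ hs.2 (hφ.mem_Icc x).1 (hφ.mem_Icc x).2⟩

lemma natCeil_div (hφ : IsTest φ) {n : ℕ} (hn : 0 < n) :
    IsTest fun x => (⌈n * φ x⌉₊ : ℝ) / n where
  measurable :=
    (measurable_from_top.comp (measurable_const.mul hφ.measurable).nat_ceil).div_const _
  mem_Icc x := ⟨by positivity, div_le_one_of_le₀ (Nat.cast_le.2 <| Nat.ceil_le.2 <|
    mul_le_of_le_one_right (Nat.cast_nonneg n) (hφ.mem_Icc x).2) (Nat.cast_nonneg n)⟩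

lemma integral_natCeil_div_le (hφ : IsTest φ) (μ : Measure Ω) [IsProbabilityMeasure μ] {n : ℕ}
    (hn : 0 < n) : ∫ x, (⌈n * φ x⌉₊ : ℝ) / n ∂μ ≤ ∫ x, φ x ∂μ + 1 / n := by
  have hn' : (0 : ℝ) < n := Nat.cast_pos.2 hn
  have hle : ∀ x, (⌈n * φ x⌉₊ : ℝ) / n ≤ φ x + 1 / n := fun x => by
    rw [div_le_iff₀ hn', add_mul, one_div_mul_cancel hn'.ne']
    linarith [Nat.ceil_lt_add_one (mul_nonneg hn'.le (hφ.mem_Icc x).1)]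
  calc ∫ x, (⌈n * φ x⌉₊ : ℝ) / n ∂μ ≤ ∫ x, (φ x + 1 / n) ∂μ :=
        integral_mono ((hφ.natCeil_div hn).integrable μ)
          ((hφ.integrable μ).add (integrable_const _)) hle
    _ = ∫ x, φ x ∂μ + 1 / n := by simp [integral_add (hφ.integrable μ) (integrable_const _)]

lemma integral_natCeil_div_eq_zero (hφ : IsTest φ) {μ : Measure Ω} [IsFiniteMeasure μ]
    (h : ∫ x, φ x ∂μ = 0) (n : ℕ) : ∫ x, (⌈n * φ x⌉₊ : ℝ) / n ∂μ = 0 := by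
  have hφ0 : φ =ᵐ[μ] 0 :=
    (integral_eq_zero_iff_of_nonneg (fun x => (hφ.mem_Icc x).1) (hφ.integrable μ)).1 h
  rw [integral_congr_ae (g := 0) (hφ0.mono fun x hx => by simp [hx])]
  simp

end IsTest

section TradeOff

variable {Ω : Type*} [MeasurableSpace Ω] {P Q : Measure Ω} {a : ℝ}

lemma tradeOff_le [IsProbabilityMeasure Q] {φ : Ω → ℝ} (hφ : IsTest φ) (hφa : ∫ x, φ x ∂P ≤ a) :
    tradeOff P Q a ≤ 1 - ∫ x, φ x ∂Q :=
  csInf_le ⟨0, by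
      rintro _ ⟨ψ, hψm, hψ, -, rfl⟩
      linarith [(IsTest.mk (Ω := Ω) hψm hψ).integral_le_one Q]⟩
    ⟨φ, hφ.measurable, hφ.mem_Icc, hφa, rfl⟩

lemma tradeOff_set_nonempty (ha : 0 ≤ a) :
    { b : ℝ | ∃ φ : Ω → ℝ, Measurable φ ∧ (∀ x, φ x ∈ Icc (0:ℝ) 1) ∧
      (∫ x, φ x ∂P) ≤ a ∧ b = 1 - ∫ x, φ x ∂Q }.Nonempty :=
  ⟨_, fun _ => 0, measurable_const, fun _ => ⟨le_rfl, zero_le_one⟩, by simpa using ha, rfl⟩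

lemma le_tradeOff {c : ℝ} (ha : 0 ≤ a)
    (h : ∀ φ : Ω → ℝ, IsTest φ → ∫ x, φ x ∂P ≤ a → c ≤ 1 - ∫ x, φ x ∂Q) :
    c ≤ tradeOff P Q a :=
  le_csInf (tradeOff_set_nonempty ha) fun _ ⟨φ, hφm, hφ, hφa, hb⟩ => hb ▸ h φ ⟨hφm, hφ⟩ hφa

lemma tradeOff_anti [IsProbabilityMeasure Q] {a' : ℝ} (ha : 0 ≤ a) (haa' : a ≤ a') :
    tradeOff P Q a' ≤ tradeOff P Q a :=
  le_tradeOff ha fun _ hφ hφa => tradeOff_le hφ (hφa.trans haa')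

lemma exists_isTest_lt_tradeOff_add (ha : 0 ≤ a) {ε : ℝ} (hε : 0 < ε) :
    ∃ φ : Ω → ℝ, IsTest φ ∧ ∫ x, φ x ∂P ≤ a ∧ 1 - ∫ x, φ x ∂Q < tradeOff P Q a + ε := by
  obtain ⟨_, ⟨φ, hφm, hφ, hφa, rfl⟩, hlt⟩ :=
    Real.lt_sInf_add_pos (tradeOff_set_nonempty (P := P) (Q := Q) ha) hε
  exact ⟨φ, ⟨hφm, hφ⟩, hφa, hlt⟩

/-- Shrinking a test by the factor `a / (a + δ)` brings its size down to `a`. -/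
lemma tradeOff_le_add_div [IsProbabilityMeasure Q] {φ : Ω → ℝ} (hφ : IsTest φ) {δ : ℝ}
    (ha : 0 < a) (hδ : 0 ≤ δ) (hφa : ∫ x, φ x ∂P ≤ a + δ) :
    tradeOff P Q a ≤ 1 - ∫ x, φ x ∂Q + δ / a := by
  set s := a / (a + δ)
  have hs : s ∈ Icc (0 : ℝ) 1 := ⟨by positivity, div_le_one_of_le₀ (by linarith) (by linarith)⟩
  have hsize : ∫ x, s * φ x ∂P ≤ a := by
    rw [integral_const_mul]
    calc s * ∫ x, φ x ∂P ≤ s * (a + δ) := mul_le_mul_of_nonneg_left hφa hs.1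
      _ = a := div_mul_cancel₀ a (by positivity)
  have h1s : 1 - s ≤ δ / a := by
    rw [one_sub_div (by positivity), add_sub_cancel_left]
    exact div_le_div_of_nonneg_left hδ ha (by linarith)
  have hI := hφ.integral_le_one Q
  calc tradeOff P Q a ≤ 1 - ∫ x, s * φ x ∂Q := tradeOff_le (hφ.const_mul hs) hsize
    _ = (1 - s) * ∫ x, φ x ∂Q + (1 - ∫ x, φ x ∂Q) := by rw [integral_const_mul]; ring
    _ ≤ 1 - ∫ x, φ x ∂Q + δ / a := by nlinarith [hφ.integral_nonneg Q, hs.2]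

end TradeOff

section Product

variable {Ω₁ Ω₂ Ω₃ : Type*} [MeasurableSpace Ω₁] [MeasurableSpace Ω₂]

namespace IsTest

lemma prodMk_left {φ : Ω₁ × Ω₂ → ℝ} (hφ : IsTest φ) (x : Ω₁) : IsTest fun y => φ (x, y) :=
  ⟨hφ.measurable.comp measurable_prodMk_left, fun _ => hφ.mem_Icc _⟩

lemma integral_prod_right {φ : Ω₁ × Ω₂ → ℝ} (hφ : IsTest φ) (ν : Measure Ω₂)
    [IsProbabilityMeasure ν] : IsTest fun x => ∫ y, φ (x, y) ∂ν :=
  ⟨hφ.measurable.stronglyMeasurable.integral_prod_right'.measurable,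
    fun x => ⟨(hφ.prodMk_left x).integral_nonneg ν, (hφ.prodMk_left x).integral_le_one ν⟩⟩

lemma integral_prod_le {φ : Ω₁ × Ω₂ → ℝ} (hφ : IsTest φ) {μ : Measure Ω₁} {ν : Measure Ω₂}
    [IsFiniteMeasure μ] [IsFiniteMeasure ν] {h : Ω₁ → ℝ} (hh : Integrable h μ)
    (hφh : ∀ x, ∫ y, φ (x, y) ∂ν ≤ h x) : ∫ p, φ p ∂(μ.prod ν) ≤ ∫ x, h x ∂μ := by
  rw [integral_prod _ (hφ.integrable _)]
  exact integral_mono (hφ.integrable _).integral_prod_left hh hφh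

end IsTest

lemma isTest_comp_nat {ψ : ℕ → Ω₂ → ℝ} (hψ : ∀ k, IsTest (ψ k)) {K : Ω₁ → ℕ}
    (hK : Measurable K) : IsTest fun p : Ω₁ × Ω₂ => ψ (K p.1) p.2 where
  measurable := by
    have : Measurable fun q : Ω₂ × ℕ => ψ q.2 q.1 :=
      measurable_from_prod_countable_left fun k => (hψ k).measurable
    exact this.comp (measurable_snd.prodMk (hK.comp measurable_fst))
  mem_Icc p := (hψ _).mem_Icc _

lemma exists_isTest_prod_of_tradeOff_le [MeasurableSpace Ω₃] {P P' : Measure Ω₁}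
    {Q Q' : Measure Ω₂} {P₁ P₁' : Measure Ω₃} [IsFiniteMeasure P] [IsProbabilityMeasure P']
    [IsFiniteMeasure Q] [IsProbabilityMeasure Q'] [IsProbabilityMeasure P₁]
    [IsProbabilityMeasure P₁']
    (h23 : ∀ α ∈ Icc (0:ℝ) 1, tradeOff Q Q' α ≤ tradeOff P₁ P₁' α)
    {φ : Ω₁ × Ω₃ → ℝ} (hφ : IsTest φ) {n : ℕ} (hn : 0 < n) {ε : ℝ} (hε : 0 < ε) :
    ∃ ψ : Ω₁ × Ω₂ → ℝ, IsTest ψ ∧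
      ∫ p, ψ p ∂(P.prod Q) ≤ ∫ x, (⌈n * ∫ y, φ (x, y) ∂P₁⌉₊ : ℝ) / n ∂P ∧
      ∫ p, φ p ∂(P'.prod P₁') ≤ ∫ p, ψ p ∂(P'.prod Q') + ε := by
  set g : Ω₁ → ℝ := fun x => ∫ y, φ (x, y) ∂P₁
  have hg : IsTest g := hφ.integral_prod_right P₁
  set K : Ω₁ → ℕ := fun x => ⌈n * g x⌉₊
  choose ψ hψ hψsize hψpow using fun k : ℕ =>
    exists_isTest_lt_tradeOff_add (P := Q) (Q := Q') (a := k / n) (by positivity) hε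
  have hΨ : IsTest fun p : Ω₁ × Ω₂ => ψ (K p.1) p.2 :=
    isTest_comp_nat hψ (measurable_const.mul hg.measurable).nat_ceil
  refine ⟨_, hΨ, hΨ.integral_prod_le ((hg.natCeil_div hn).integrable P) fun x => hψsize (K x), ?_⟩
  have hfiber : ∀ x, ∫ y, φ (x, y) ∂P₁' ≤ ∫ y, ψ (K x) y ∂Q' + ε := fun x => by
    have hgK : g x ≤ K x / n := by
      rw [le_div_iff₀ (Nat.cast_pos.2 hn), mul_comm]; exact Nat.le_ceil _
    have := calc 1 - ∫ y, ψ (K x) y ∂Q' < tradeOff Q Q' (K x / n) + ε := hψpow (K x)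
      _ ≤ tradeOff P₁ P₁' (K x / n) + ε := by
        gcongr; exact h23 _ ((hg.natCeil_div hn).mem_Icc x)
      _ ≤ tradeOff P₁ P₁' (g x) + ε := by gcongr; exact tradeOff_anti (hg.mem_Icc x).1 hgK
      _ ≤ 1 - ∫ y, φ (x, y) ∂P₁' + ε := by gcongr; exact tradeOff_le (hφ.prodMk_left x) le_rfl
    linarith
  have hΨ' := (hΨ.integral_prod_right Q').integrable P'
  calc ∫ p, φ p ∂(P'.prod P₁') ≤ ∫ x, (∫ y, ψ (K x) y ∂Q' + ε) ∂P' :=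
        hφ.integral_prod_le (hΨ'.add (integrable_const ε)) hfiber
    _ = ∫ p, ψ (K p.1) p.2 ∂(P'.prod Q') + ε := by
        rw [integral_add hΨ' (integrable_const ε), integral_prod _ (hΨ.integrable _)]
        simp

end Product

/-- tensor order: if `f₂ = T(Q,Q') ≤ f₃ = T(P₁,P₁')` pointwise,
then `f₁ ⊗ f₂ ≤ f₁ ⊗ f₃` pointwise, where the tensor of trade-off functions is
realized by the trade-off function of the corresponding product distributions:
`T(P⊗Q, P'⊗Q') = T(P,P') ⊗ T(Q,Q')`. -/
theorem stmt_8 {Ω₁ Ω₂ Ω₃ : Type*}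
    [MeasurableSpace Ω₁] [MeasurableSpace Ω₂] [MeasurableSpace Ω₃]
    (P P' : Measure Ω₁) (Q Q' : Measure Ω₂) (P₁ P₁' : Measure Ω₃)
    [IsProbabilityMeasure P] [IsProbabilityMeasure P']
    [IsProbabilityMeasure Q] [IsProbabilityMeasure Q']
    [IsProbabilityMeasure P₁] [IsProbabilityMeasure P₁']
    (h23 : ∀ α ∈ Set.Icc (0:ℝ) 1, tradeOff Q Q' α ≤ tradeOff P₁ P₁' α) :
    ∀ α ∈ Set.Icc (0:ℝ) 1,
      tradeOff (P.prod Q) (P'.prod Q') α ≤ tradeOff (P.prod P₁) (P'.prod P₁') α := by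
  intro α hα
  refine le_tradeOff hα.1 fun φ hφ hφα => le_of_forall_pos_le_add fun ε hε => ?_
  have hg := hφ.integral_prod_right P₁
  have hφα' : ∫ x, ∫ y, φ (x, y) ∂P₁ ∂P ≤ α := integral_prod _ (hφ.integrable (P.prod P₁)) ▸ hφα
  rcases hα.1.eq_or_lt with rfl | hα₀
  · obtain ⟨ψ, hψ, hsize, hpow⟩ :=
      exists_isTest_prod_of_tradeOff_le (P := P) (P' := P') h23 hφ one_pos hε
    have hG : ∫ x, ∫ y, φ (x, y) ∂P₁ ∂P = 0 := le_antisymm hφα' (hg.integral_nonneg P)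
    have hψ₀ := hsize.trans (hg.integral_natCeil_div_eq_zero hG 1).le
    linarith [tradeOff_le (P := P.prod Q) (Q := P'.prod Q') hψ hψ₀]
  · obtain ⟨m, hm⟩ := exists_nat_one_div_lt (half_pos (mul_pos hε hα₀))
    have hδ : 1 / ((m + 1 : ℕ) : ℝ) / α < ε / 2 := by
      rw [div_lt_iff₀ hα₀]; push_cast; linarith
    obtain ⟨ψ, hψ, hsize, hpow⟩ :=
      exists_isTest_prod_of_tradeOff_le (P := P) (P' := P') h23 hφ m.succ_pos (half_pos hε)
    have hψα := hsize.trans ((hg.integral_natCeil_div_le P m.succ_pos).trans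
      (add_le_add_left hφα' _))
    linarith [tradeOff_le_add_div (Q := P'.prod Q') hψ hα₀ (by positivity) hψα]
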